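/- arXiv:2206.00872 — 3 statements merged into one kernel-verified Lean document; each statement's English description precedes it below -/
import Mathlib

section
/- Let f : ℕ → ℂ be a function and M ∈ ℕ such that f(d₁d₂) = f(d₁)f(d₂) whenever gcd(M·d₁, d₂) = 1, and suppose the series ∑_{d≥1} μ(d) f(d) converges absolutely. Then ∑_{d=1}^∞ μ(d) f(d) = (∑_{d₁ ∣ M} μ(d₁) f(d₁)) · ∏_{ℓ prime, ℓ ∤ M} (1 − f(ℓ)). -/
/-!
Every `n` factors as `a * b` with `a ∣ M` and `b` coprime to `M` in at most one way, namely
`a = gcd n M`, and for squarefree `n` this factorisation exists. Since `μ f` vanishes off the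
squarefree integers, `μ f` is the Dirichlet convolution of its restriction to the divisors of `M`
with its restriction to the integers coprime to `M`, so its sum is the product of the two sums.
The second restriction is multiplicative, so its sum is an Euler product, whose factor at `p` is
`1 - f p` for `p ∤ M` and `1` for `p ∣ M`.
-/

open scoped ArithmeticFunction.Moebius LSeries.notation
open ArithmeticFunction

lemma LSeries.term_at_zero {f : ℕ → ℂ} (hf : f 0 = 0) : term f 0 = f := by
  funext n
  simp [term_def₀ hf]

lemma LSeries_at_zero {f : ℕ → ℂ} (hf : f 0 = 0) : LSeries f 0 = ∑' n, f n := by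
  rw [LSeries, LSeries.term_at_zero hf]

lemma tsum_convolution {f g : ℕ → ℂ} (hf₀ : f 0 = 0) (hg₀ : g 0 = 0) (hf : Summable f)
    (hg : Summable g) : ∑' n, (f ⍟ g) n = (∑' n, f n) * ∑' n, g n := by
  have hLf : LSeriesSummable f 0 := by rwa [LSeriesSummable, LSeries.term_at_zero hf₀]
  have hLg : LSeriesSummable g 0 := by rwa [LSeriesSummable, LSeries.term_at_zero hg₀]
  rw [← LSeries_at_zero (LSeries.convolution_map_zero f g), LSeries_convolution' hLf hLg,
    LSeries_at_zero hf₀, LSeries_at_zero hg₀]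

lemma Nat.gcd_mul_eq_left_of_dvd_of_coprime {a b M : ℕ} (ha : a ∣ M) (hb : b.Coprime M) :
    (a * b).gcd M = a := by
  rw [Nat.Coprime.gcd_mul_right_cancel a hb, Nat.gcd_eq_left ha]

lemma Squarefree.coprime_div_gcd {n : ℕ} (hn : Squarefree n) (M : ℕ) :
    (n / n.gcd M).Coprime M := by
  have hg : n.gcd M ∣ n := Nat.gcd_dvd_left n M
  have hcop : (n / n.gcd M).Coprime (n.gcd M) :=
    (Nat.coprime_of_squarefree_mul (by rwa [Nat.mul_div_cancel' hg])).symm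
  exact Nat.Coprime.eq_one_of_dvd (hcop.coprime_dvd_left (Nat.gcd_dvd_left _ M))
    (Nat.gcd_dvd_gcd_of_dvd_left M (Nat.div_dvd_of_dvd hg))

section Ring

variable {R : Type*} [CommRing R] [TopologicalSpace R]

lemma tsum_moebius_mul_prime_pow (g : ℕ → R) {p : ℕ} (hp : p.Prime) :
    ∑' e, (μ (p ^ e) : R) * g (p ^ e) = g 1 - g p := by
  rw [tsum_eq_sum (s := {0, 1}) fun e he => ?_]
  · simp [moebius_apply_prime hp, sub_eq_add_neg]
  · simp only [Finset.mem_insert, Finset.mem_singleton, not_or] at he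
    simp [moebius_apply_prime_pow hp he.1, he.2]

lemma tsum_moebius_mul_ite_dvd (g : ℕ → R) {M : ℕ} (hM : M ≠ 0) :
    ∑' n, (μ n : R) * (if n ∣ M then g n else 0) = ∑ d ∈ M.divisors, (μ d : R) * g d := by
  rw [tsum_eq_sum (s := M.divisors) fun n hn => by simp_all]
  exact Finset.sum_congr rfl fun d hd => by rw [if_pos (Nat.dvd_of_mem_divisors hd)]

lemma tprod_primes_one_sub_ite_coprime (g : ℕ → R) (M : ℕ) :
    ∏' p : Nat.Primes, (1 - if (p : ℕ).Coprime M then g p else 0) =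
      ∏' ℓ : {p : ℕ // p.Prime ∧ ¬ p ∣ M}, (1 - g ℓ) := by
  have hinj : Function.Injective
      (fun ℓ => ⟨ℓ.1, ℓ.2.1⟩ : {p : ℕ // p.Prime ∧ ¬ p ∣ M} → Nat.Primes) :=
    fun a b h => Subtype.ext <| by injection h
  refine (hinj.tprod_eq fun p hp => ?_).symm.trans (tprod_congr fun ℓ => ?_)
  · have hpM : ¬ (p : ℕ) ∣ M := fun h => hp <| by
      simp [Nat.Prime.coprime_iff_not_dvd p.2, h]
    exact ⟨⟨p, p.2, hpM⟩, rfl⟩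
  · rw [if_pos ((Nat.Prime.coprime_iff_not_dvd ℓ.2.1).mpr ℓ.2.2)]

end Ring

lemma tsum_moebius_mul_eq_tprod {R : Type*} [NormedCommRing R] [CompleteSpace R] {g : ℕ → R}
    (hg₁ : g 1 = 1) (hmul : ∀ {m n : ℕ}, m.Coprime n → g (m * n) = g m * g n)
    (hsum : Summable fun n => ‖(μ n : R) * g n‖) :
    ∑' n, (μ n : R) * g n = ∏' p : Nat.Primes, (1 - g p) := by
  have hμg : ∀ {m n : ℕ}, m.Coprime n → (μ (m * n) : R) * g (m * n) = μ m * g m * (μ n * g n) :=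
    fun hmn => by rw [isMultiplicative_moebius.map_mul_of_coprime hmn, hmul hmn]; push_cast; ring
  rw [← EulerProduct.eulerProduct_tprod (by simp [hg₁]) hμg hsum (by simp)]
  exact tprod_congr fun p => by rw [tsum_moebius_mul_prime_pow g p.2, hg₁]

section RelativelyMultiplicative

variable {f : ℕ → ℂ} {M : ℕ}

lemma eq_zero_or_map_one
    (hmul : ∀ d₁ d₂ : ℕ, Nat.gcd (M * d₁) d₂ = 1 → f (d₁ * d₂) = f d₁ * f d₂) :
    f = 0 ∨ f 1 = 1 := by
  have hf : ∀ d, f d = f d * f 1 := fun d => by simpa using hmul d 1 (Nat.gcd_one_right _)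
  rcases eq_or_ne (f 1) 0 with h | h
  · exact Or.inl (funext fun d => by rw [hf d, h, mul_zero, Pi.zero_apply])
  · exact Or.inr (by simpa [h] using hf 1)

lemma ite_coprime_mul (hmul : ∀ d₁ d₂ : ℕ, Nat.gcd (M * d₁) d₂ = 1 → f (d₁ * d₂) = f d₁ * f d₂)
    {m n : ℕ} (hmn : m.Coprime n) :
    (if (m * n).Coprime M then f (m * n) else 0) =
      (if m.Coprime M then f m else 0) * (if n.Coprime M then f n else 0) := by
  by_cases hm : m.Coprime M
  · by_cases hn : n.Coprime M
    · rw [if_pos (hm.mul_left hn), if_pos hm, if_pos hn, hmul m n (hn.symm.mul_left hmn)]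
    · simp [Nat.coprime_mul_iff_left, hn]
  · simp [Nat.coprime_mul_iff_left, hm]

lemma moebius_mul_ite_dvd_mul_moebius_mul_ite_coprime
    (hmul : ∀ d₁ d₂ : ℕ, Nat.gcd (M * d₁) d₂ = 1 → f (d₁ * d₂) = f d₁ * f d₂) (a b : ℕ) :
    ((μ a : ℂ) * if a ∣ M then f a else 0) * ((μ b : ℂ) * if b.Coprime M then f b else 0) =
      if a ∣ M ∧ b.Coprime M then (μ (a * b) : ℂ) * f (a * b) else 0 := by
  by_cases hab : a ∣ M ∧ b.Coprime M
  · obtain ⟨ha, hb⟩ := hab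
    have hcop : a.Coprime b := Nat.Coprime.coprime_dvd_left ha hb.symm
    rw [if_pos ha, if_pos hb, if_pos ⟨ha, hb⟩, isMultiplicative_moebius.map_mul_of_coprime hcop,
      hmul a b (hb.symm.mul_left hcop)]
    push_cast
    ring
  · rw [if_neg hab]
    rcases not_and_or.mp hab with h | h <;> simp [h]

lemma convolution_moebius_mul_ite_dvd_moebius_mul_ite_coprime
    (hmul : ∀ d₁ d₂ : ℕ, Nat.gcd (M * d₁) d₂ = 1 → f (d₁ * d₂) = f d₁ * f d₂) :
    ((fun n => (μ n : ℂ) * if n ∣ M then f n else 0) ⍟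
      fun n => (μ n : ℂ) * if n.Coprime M then f n else 0) = fun n => (μ n : ℂ) * f n := by
  funext n
  rcases eq_or_ne n 0 with rfl | hn
  · simp
  have hmem : (n.gcd M, n / n.gcd M) ∈ n.divisorsAntidiagonal :=
    Nat.mem_divisorsAntidiagonal.mpr ⟨Nat.mul_div_cancel' (Nat.gcd_dvd_left n M), hn⟩
  rw [LSeries.convolution_def]
  beta_reduce
  rw [Finset.sum_eq_single_of_mem _ hmem fun ⟨a, b⟩ hab hne => ?_,
    moebius_mul_ite_dvd_mul_moebius_mul_ite_coprime hmul,
    Nat.mul_div_cancel' (Nat.gcd_dvd_left n M)]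
  · by_cases hsq : Squarefree n
    · exact if_pos ⟨Nat.gcd_dvd_right n M, hsq.coprime_div_gcd M⟩
    · simp [moebius_eq_zero_of_not_squarefree hsq]
  · rw [moebius_mul_ite_dvd_mul_moebius_mul_ite_coprime hmul, if_neg]
    rintro ⟨ha, hb⟩
    obtain ⟨rfl, hn⟩ := Nat.mem_divisorsAntidiagonal.mp hab
    have ha₀ : 0 < a := Nat.pos_of_ne_zero (left_ne_zero_of_mul hn)
    simp [Nat.gcd_mul_eq_left_of_dvd_of_coprime ha hb, Nat.mul_div_cancel_left b ha₀] at hne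

end RelativelyMultiplicative

theorem stmt_2 (f : ℕ → ℂ) (M : ℕ) (hM : M ≠ 0)
    (hmul : ∀ d₁ d₂ : ℕ, Nat.gcd (M * d₁) d₂ = 1 → f (d₁ * d₂) = f d₁ * f d₂)
    (habs : Summable fun d : ℕ => ‖((ArithmeticFunction.moebius d : ℤ) : ℂ) * f d‖) :
    ∑' d : ℕ, ((ArithmeticFunction.moebius d : ℤ) : ℂ) * f d =
      (∑ d₁ ∈ M.divisors, ((ArithmeticFunction.moebius d₁ : ℤ) : ℂ) * f d₁) *
        ∏' ℓ : {p : ℕ // p.Prime ∧ ¬ p ∣ M}, (1 - f ℓ) := by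
  rcases eq_zero_or_map_one hmul with rfl | hf₁
  · simp
  have hle (P : ℕ → Prop) [DecidablePred P] (n : ℕ) :
      ‖(μ n : ℂ) * if P n then f n else 0‖ ≤ ‖(μ n : ℂ) * f n‖ := by
    split_ifs
    · exact le_rfl
    · rw [mul_zero, norm_zero]
      exact norm_nonneg _
  have hcoprime := habs.of_nonneg_of_le (fun _ => norm_nonneg _) (hle (·.Coprime M))
  rw [← tsum_moebius_mul_ite_dvd f hM, ← tprod_primes_one_sub_ite_coprime f M,
    ← tsum_moebius_mul_eq_tprod (by simp [hf₁]) (ite_coprime_mul hmul) hcoprime,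
    ← tsum_convolution (by simp) (by simp) (habs.of_norm_bounded (hle (· ∣ M))) hcoprime.of_norm,
    convolution_moebius_mul_ite_dvd_moebius_mul_ite_coprime hmul]
end

section
/- If S ≤ G₁ × G₂ is the fibered product of two groups G₁ and G₂ over a common cyclic quotient C, then the commutator subgroup [S,S] equals [G₁,G₁] × [G₂,G₂]. -/
open scoped commutatorElement

theorem stmt_8 {G₁ G₂ C : Type*} [Group G₁] [Group G₂] [Group C] [IsCyclic C]
    (ψ₁ : G₁ →* C) (ψ₂ : G₂ →* C)
    (h₁ : Function.Surjective ψ₁) (h₂ : Function.Surjective ψ₂)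
    (S : Subgroup (G₁ × G₂)) (hS : ∀ x : G₁ × G₂, x ∈ S ↔ ψ₁ x.1 = ψ₂ x.2) :
    ⁅S, S⁆ = (commutator G₁).prod (commutator G₂) := by
  obtain ⟨c, hc⟩ := IsCyclic.exists_generator (α := C)
  obtain ⟨x₁, hx₁⟩ := h₁ c
  obtain ⟨x₂, hx₂⟩ := h₂ c
  apply le_antisymm
  · rw [Subgroup.commutator_le]
    intro g hg h hh
    refine Subgroup.mem_prod.2 ⟨?_, ?_⟩
    · exact Subgroup.commutator_mem_commutator (Subgroup.mem_top _) (Subgroup.mem_top _)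
    · exact Subgroup.commutator_mem_commutator (Subgroup.mem_top _) (Subgroup.mem_top _)
  · have key₁ : ∀ g h : G₁, ((⁅g, h⁆, 1) : G₁ × G₂) ∈ ⁅S, S⁆ := by
      intro g h
      obtain ⟨m, hm⟩ := hc (ψ₁ g)
      obtain ⟨n, hn⟩ := hc (ψ₁ h)
      have hgm : (g, x₂ ^ m) ∈ S := by
        rw [hS]; simp [map_zpow, hx₂, hm]
      have hhn : (h, x₂ ^ n) ∈ S := by
        rw [hS]; simp [map_zpow, hx₂, hn]
      have := Subgroup.commutator_mem_commutator hgm hhn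
      have heq : ⁅((g, x₂ ^ m) : G₁ × G₂), (h, x₂ ^ n)⁆ = (⁅g, h⁆, 1) := by
        have : ⁅x₂ ^ m, x₂ ^ n⁆ = 1 :=
          commutatorElement_eq_one_iff_commute.2 (Commute.zpow_zpow_self x₂ m n)
        simp [commutatorElement_def, Prod.ext_iff, this]
        group
      rwa [heq] at this
    have key₂ : ∀ g h : G₂, (((1 : G₁), ⁅g, h⁆) : G₁ × G₂) ∈ ⁅S, S⁆ := by
      intro g h
      obtain ⟨m, hm⟩ := hc (ψ₂ g)
      obtain ⟨n, hn⟩ := hc (ψ₂ h)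
      have hgm : (x₁ ^ m, g) ∈ S := by
        rw [hS]; simp [map_zpow, hx₁, hm]
      have hhn : (x₁ ^ n, h) ∈ S := by
        rw [hS]; simp [map_zpow, hx₁, hn]
      have := Subgroup.commutator_mem_commutator hgm hhn
      have heq : ⁅((x₁ ^ m, g) : G₁ × G₂), (x₁ ^ n, h)⁆ = (1, ⁅g, h⁆) := by
        have : ⁅x₁ ^ m, x₁ ^ n⁆ = 1 :=
          commutatorElement_eq_one_iff_commute.2 (Commute.zpow_zpow_self x₁ m n)
        simp [commutatorElement_def, Prod.ext_iff, this]
        group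
      rwa [heq] at this
    rintro ⟨a, b⟩ ⟨ha, hb⟩
    have hab : ((a, b) : G₁ × G₂) = (a, 1) * (1, b) := by simp
    rw [hab]
    refine mul_mem ?_ ?_
    · have : commutator G₁ ≤ Subgroup.comap (MonoidHom.inl G₁ G₂) ⁅S, S⁆ := by
        rw [commutator_def, Subgroup.commutator_le]
        intro g _ h _
        simpa [Subgroup.mem_comap, commutatorElement_def] using key₁ g h
      exact this ha
    · have : commutator G₂ ≤ Subgroup.comap (MonoidHom.inr G₁ G₂) ⁅S, S⁆ := by
        rw [commutator_def, Subgroup.commutator_le]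
        intro g _ h _
        simpa [Subgroup.mem_comap, commutatorElement_def] using key₂ g h
      exact this hb
end

section
/- The rational functions v(t) = (4t³ − 3t − 1)/(3t) and u(t) = 256·t³(t−1)³(t²+t+1)³ / ((2t+1)³(4t²−2t+1)³) satisfy the identity 256·(u+1)³/u = 27·(v+1)³(v+3)³(v²+3)³ / (v³(v²+3v+3)³) as rational functions in t over ℚ. -/
/-!
Both sides are the same rational function of `t`. With
`N = (4t³ - 1)(4t³ + 6t - 1)((4t³ - 3t - 1)² + 27t²)`, the factorizations
`(t - 1)(t² + t + 1) = t³ - 1` and `(2t + 1)(4t² - 2t + 1) = 8t³ + 1` give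
`u = 256 t³ (t³ - 1)³ / (8t³ + 1)³` and `u + 1 = N / (8t³ + 1)³`, while
`(v + 1)(v + 3)(v² + 3) = N / (3t)⁴` and `v (v² + 3v + 3) = (t³ - 1)(8t³ + 1)² / (3t)³`.
Hence both sides equal `N³ / (t³ (t³ - 1)³ (8t³ + 1)⁶)`.
-/

section
variable {K : Type*} [Field K]

def paramU (t : K) : K :=
  256 * t ^ 3 * (t - 1) ^ 3 * (t ^ 2 + t + 1) ^ 3 / ((2 * t + 1) ^ 3 * (4 * t ^ 2 - 2 * t + 1) ^ 3)

def paramV (t : K) : K :=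
  (4 * t ^ 3 - 3 * t - 1) / (3 * t)

def commonNum (t : K) : K :=
  (4 * t ^ 3 - 1) * (4 * t ^ 3 + 6 * t - 1) * ((4 * t ^ 3 - 3 * t - 1) ^ 2 + 27 * t ^ 2)

def commonValue (t : K) : K :=
  commonNum t ^ 3 / (t ^ 3 * (t ^ 3 - 1) ^ 3 * (8 * t ^ 3 + 1) ^ 6)

theorem paramU_eq (t : K) : paramU t = 256 * t ^ 3 * (t ^ 3 - 1) ^ 3 / (8 * t ^ 3 + 1) ^ 3 := by
  rw [paramU, ← mul_pow, show (2 * t + 1) * (4 * t ^ 2 - 2 * t + 1) = 8 * t ^ 3 + 1 by ring]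
  ring

theorem paramU_add_one {t : K} (h8 : 8 * t ^ 3 + 1 ≠ 0) :
    paramU t + 1 = commonNum t / (8 * t ^ 3 + 1) ^ 3 := by
  rw [paramU_eq, div_add_one (pow_ne_zero 3 h8), commonNum]
  ring

theorem paramV_add_one_mul_add_three_mul {t : K} (ht : t ≠ 0) (h3 : (3 : K) ≠ 0) :
    (paramV t + 1) * (paramV t + 3) * (paramV t ^ 2 + 3) = commonNum t / (3 * t) ^ 4 := by
  rw [paramV, commonNum]
  field_simp
  ring

theorem paramV_mul {t : K} (ht : t ≠ 0) (h3 : (3 : K) ≠ 0) :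
    paramV t * (paramV t ^ 2 + 3 * paramV t + 3) =
      (t ^ 3 - 1) * (8 * t ^ 3 + 1) ^ 2 / (3 * t) ^ 3 := by
  rw [paramV]
  field_simp
  ring

theorem paramU_eq_commonValue {t : K} (h2 : (2 : K) ≠ 0) :
    256 * (paramU t + 1) ^ 3 / paramU t = commonValue t := by
  rcases eq_or_ne (8 * t ^ 3 + 1) 0 with h8 | h8
  -- then `paramU t = 0` and both sides are `0` by the convention `x / 0 = 0`
  · simp [paramU_eq, commonValue, h8]
  have h256 : (256 : K) ≠ 0 := by
    rw [show (256 : K) = 2 ^ 8 by norm_num]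
    exact pow_ne_zero 8 h2
  rw [paramU_add_one h8, paramU_eq, commonValue]
  field_simp

theorem paramV_eq_commonValue {t : K} (ht : t ≠ 0) (h3 : (3 : K) ≠ 0) :
    27 * (paramV t + 1) ^ 3 * (paramV t + 3) ^ 3 * (paramV t ^ 2 + 3) ^ 3 /
      (paramV t ^ 3 * (paramV t ^ 2 + 3 * paramV t + 3) ^ 3) = commonValue t := by
  rw [show 27 * (paramV t + 1) ^ 3 * (paramV t + 3) ^ 3 * (paramV t ^ 2 + 3) ^ 3 /
      (paramV t ^ 3 * (paramV t ^ 2 + 3 * paramV t + 3) ^ 3) =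
      27 * ((paramV t + 1) * (paramV t + 3) * (paramV t ^ 2 + 3)) ^ 3 /
        (paramV t * (paramV t ^ 2 + 3 * paramV t + 3)) ^ 3 by ring,
    paramV_add_one_mul_add_three_mul ht h3, paramV_mul ht h3, commonValue]
  field_simp
  ring

end

theorem stmt_12 :
    let t : RatFunc ℚ := RatFunc.X
    let v : RatFunc ℚ := (4 * t ^ 3 - 3 * t - 1) / (3 * t)
    let u : RatFunc ℚ := 256 * t ^ 3 * (t - 1) ^ 3 * (t ^ 2 + t + 1) ^ 3 /
      ((2 * t + 1) ^ 3 * (4 * t ^ 2 - 2 * t + 1) ^ 3)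
    256 * (u + 1) ^ 3 / u =
      27 * (v + 1) ^ 3 * (v + 3) ^ 3 * (v ^ 2 + 3) ^ 3 /
        (v ^ 3 * (v ^ 2 + 3 * v + 3) ^ 3) := by
  exact (paramU_eq_commonValue two_ne_zero).trans
    (paramV_eq_commonValue RatFunc.X_ne_zero three_ne_zero).symm
end
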